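/- arXiv:1904.00219 — 3 statements merged into one kernel-verified Lean document; each statement's English description precedes it below -/
import Mathlib

section
/- Let r ∈ ℚ_{>0} \ ℕ with n(r) > 1 (so d(r) > 1 and S_r is atomic). Then the catenary degree of S_r equals max{ n(r), d(r) }; moreover, for every x ∈ S_r with c(x) > 0 one has c(x) = max{ n(r), d(r) }, i.e., the set of positive catenary degrees of S_r is the singleton { max{ n(r), d(r) } }. -/
open Finsupp
open scoped ENNReal

/-- The Puiseux monoid (rational cyclic semiring) `S_r`, the additive submonoid of `ℚ`
generated by the nonnegative powers of `r`. -/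
def S (r : ℚ) : AddSubmonoid ℚ := AddSubmonoid.closure {x : ℚ | ∃ n : ℕ, x = r ^ n}

/-- A factorization of `x` over the powers of `r`: a finitely supported choice of
coefficients `α i` with `∑ α i * r ^ i = x`. -/
def IsFactorization (r x : ℚ) (α : ℕ →₀ ℕ) : Prop :=
  (α.sum fun i c => (c : ℚ) * r ^ i) = x

/-- The length of a factorization. -/
def flen (α : ℕ →₀ ℕ) : ℕ := α.sum fun _ c => c

/-- The set of lengths of factorizations of `x` over the powers of `r`. -/
def lengthSet (r x : ℚ) : Set ℕ :=
  {t | ∃ α : ℕ →₀ ℕ, IsFactorization r x α ∧ flen α = t}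

/-- An atom of `S_r`: a nonzero element that is not the sum of two nonzero elements. -/
def IsAtomS (r a : ℚ) : Prop :=
  a ∈ S r ∧ a ≠ 0 ∧ ¬ ∃ y z : ℚ, y ∈ S r ∧ z ∈ S r ∧ y ≠ 0 ∧ z ≠ 0 ∧ a = y + z

/-- The set of lengths of `x` as sums of atoms of `S_r`. -/
def atomLengthSet (r x : ℚ) : Set ℕ :=
  {t | ∃ f : Fin t → ℚ, (∀ i, IsAtomS r (f i)) ∧ ∑ i, f i = x}

/-- The greatest common divisor of two factorizations. -/
noncomputable def fgcd (α β : ℕ →₀ ℕ) : ℕ →₀ ℕ := Finsupp.zipWith min (min_self 0) α β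

/-- The distance between two factorizations. -/
noncomputable def fdist (α β : ℕ →₀ ℕ) : ℕ :=
  max (flen α - flen (fgcd α β)) (flen β - flen (fgcd α β))

/-- There is an `N`-chain of factorizations of `x` connecting `α` and `β`. -/
def HasChain (r x : ℚ) (N : ℕ) (α β : ℕ →₀ ℕ) : Prop :=
  ∃ (k : ℕ) (z : Fin (k + 1) → ℕ →₀ ℕ), z 0 = α ∧ z (Fin.last k) = β ∧
    (∀ i, IsFactorization r x (z i)) ∧
    ∀ i : Fin k, fdist (z i.castSucc) (z i.succ) ≤ N

/-- The catenary degree of `x` in `S_r`. -/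
noncomputable def catenary (r x : ℚ) : ℕ∞ :=
  sInf {N : ℕ∞ | ∃ n : ℕ, N = n ∧ ∀ α β : ℕ →₀ ℕ,
    IsFactorization r x α → IsFactorization r x β → HasChain r x n α β}

open Polynomial Relation

/-!
Write `r = n / d`. Trading `n` copies of `r ^ t` for `d` copies of `r ^ (t + 1)` turns a
factorization into one at distance `max n d`. Conversely, if `α ≠ β` factor the same element,
then `∑ (α t - β t) X ^ t` vanishes at `r`, so by Gauss's lemma it is a multiple of `d X - n` in
`ℤ[X]`: its lowest nonzero coefficient is a multiple of `n`, and its top one, in positive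
degree, a multiple of `d`. Hence distinct factorizations are at distance at least `max n d`.
For the upper bound, exchange in the direction that shortens the factorization (upwards when
`d < n`, downwards when `n < d`). The factorizations admitting no such move have the relevant
coefficients below `max n d`, so by the same divisibility there is only one of them, and every
factorization is joined to it by a `max n d`-chain.
-/

lemma flen_eq_degree (α : ℕ →₀ ℕ) : flen α = α.degree := rfl

lemma fgcd_apply (α β : ℕ →₀ ℕ) (t : ℕ) : fgcd α β t = min (α t) (β t) := rfl

lemma fgcd_comm (α β : ℕ →₀ ℕ) : fgcd α β = fgcd β α :=
  Finsupp.ext fun t => min_comm (α t) (β t)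

lemma flen_sub_flen_fgcd (α β : ℕ →₀ ℕ) : flen α - flen (fgcd α β) = (α - β).degree := by
  have hsplit : (α - β) + fgcd α β = α := by
    ext t
    simp only [Finsupp.add_apply, Finsupp.tsub_apply, fgcd_apply]
    omega
  have hdeg := congrArg Finsupp.degree hsplit
  rw [map_add] at hdeg
  rw [flen_eq_degree, flen_eq_degree]
  omega

lemma fdist_eq_max_degree (α β : ℕ →₀ ℕ) : fdist α β = max (α - β).degree (β - α).degree := by
  rw [fdist, flen_sub_flen_fgcd, fgcd_comm, flen_sub_flen_fgcd]

lemma fdist_comm (α β : ℕ →₀ ℕ) : fdist α β = fdist β α := by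
  rw [fdist_eq_max_degree, fdist_eq_max_degree, max_comm]

lemma natAbs_sub_le_fdist (α β : ℕ →₀ ℕ) (t : ℕ) : ((α t : ℤ) - β t).natAbs ≤ fdist α β := by
  have h₁ := Finsupp.le_degree t (α - β)
  have h₂ := Finsupp.le_degree t (β - α)
  rw [Finsupp.tsub_apply] at h₁ h₂
  rw [fdist_eq_max_degree]
  omega

lemma add_single_tsub_add_single (γ : ℕ →₀ ℕ) {i j : ℕ} (hij : i ≠ j) (a b : ℕ) :
    (γ + Finsupp.single i a) - (γ + Finsupp.single j b) = Finsupp.single i a := by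
  rw [add_tsub_add_eq_tsub_left]
  ext t
  simp only [Finsupp.tsub_apply, Finsupp.single_apply]
  split_ifs <;> omega

lemma fdist_add_single_add_single (γ : ℕ →₀ ℕ) {i j : ℕ} (hij : i ≠ j) (a b : ℕ) :
    fdist (γ + Finsupp.single i a) (γ + Finsupp.single j b) = max a b := by
  rw [fdist_eq_max_degree, add_single_tsub_add_single γ hij, add_single_tsub_add_single γ hij.symm,
    Finsupp.degree_single, Finsupp.degree_single]

lemma Relation.reflTransGen_of_descent {ι : Type*} {R : ι → ι → Prop} [Std.Symm R]
    {P Red : ι → Prop} (f : ι → ℕ)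
    (hdescent : ∀ a, P a → ¬ Red a → ∃ b, P b ∧ R a b ∧ f b < f a)
    (hunique : ∀ a b, P a → P b → Red a → Red b → a = b)
    {a b : ι} (ha : P a) (hb : P b) : ReflTransGen R a b := by
  have normalize : ∀ a, P a → ∃ c, P c ∧ Red c ∧ ReflTransGen R a c := by
    intro a ha
    induction hfa : f a using Nat.strong_induction_on generalizing a with
    | _ k ih =>
      by_cases hred : Red a
      · exact ⟨a, ha, hred, .refl⟩
      obtain ⟨b, hb, hab, hlt⟩ := hdescent a ha hred
      obtain ⟨c, hc, hcred, hbc⟩ := ih (f b) (hfa ▸ hlt) b hb rfl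
      exact ⟨c, hc, hcred, .head hab hbc⟩
  obtain ⟨c, hc, hcred, hac⟩ := normalize a ha
  obtain ⟨c', hc', hcred', hbc'⟩ := normalize b hb
  rw [hunique c c' hc hc' hcred hcred'] at hac
  exact hac.trans (Std.Symm.symm _ _ hbc')

lemma Fin.exists_castSucc_ne_succ {X : Type*} {k : ℕ} {z : Fin (k + 1) → X}
    (h : z 0 ≠ z (Fin.last k)) : ∃ i : Fin k, z i.castSucc ≠ z i.succ := by
  by_contra! hc
  refine h (Fin.induction (motive := fun j => z j = z 0) rfl ?_ (Fin.last k)).symm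
  exact fun i ih => (hc i).symm.trans ih

section Chain

variable {r x : ℚ} {N : ℕ}

def ChainStep (r x : ℚ) (N : ℕ) (α β : ℕ →₀ ℕ) : Prop :=
  IsFactorization r x α ∧ IsFactorization r x β ∧ fdist α β ≤ N

instance : Std.Symm (ChainStep r x N) where
  symm _ _ h := ⟨h.2.1, h.1, fdist_comm _ _ ▸ h.2.2⟩

lemma HasChain.refl {α : ℕ →₀ ℕ} (hα : IsFactorization r x α) : HasChain r x N α α :=
  ⟨0, fun _ => α, rfl, rfl, fun _ => hα, fun i => i.elim0⟩

lemma HasChain.cons {α β γ : ℕ →₀ ℕ} (hαβ : ChainStep r x N α β) (h : HasChain r x N β γ) :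
    HasChain r x N α γ := by
  obtain ⟨k, z, hz0, hzl, hfac, hstep⟩ := h
  refine ⟨k + 1, Fin.cons α z, rfl, by rw [← Fin.succ_last, Fin.cons_succ, hzl],
    Fin.cases hαβ.1 (by simpa using hfac), Fin.cases ?_ fun i => ?_⟩
  · simpa [hz0] using hαβ.2.2
  · simpa [← Fin.succ_castSucc] using hstep i

lemma HasChain.of_reflTransGen {α β : ℕ →₀ ℕ} (hβ : IsFactorization r x β)
    (h : ReflTransGen (ChainStep r x N) α β) : HasChain r x N α β := by
  induction h using Relation.ReflTransGen.head_induction_on with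
  | refl => exact HasChain.refl hβ
  | head hstep _ ih => exact ih.cons hstep

end Chain

section ExchangePolynomial

variable {r x : ℚ}

noncomputable def factorPoly (α : ℕ →₀ ℕ) : ℤ[X] := α.sum fun t c => monomial t (c : ℤ)

lemma coeff_factorPoly (α : ℕ →₀ ℕ) (t : ℕ) : (factorPoly α).coeff t = α t := by
  simp only [factorPoly, Finsupp.sum, finsetSum_coeff, coeff_monomial, Finset.sum_ite_eq',
    Finsupp.mem_support_iff, ne_eq, ite_not]
  split_ifs with h <;> simp [h]

lemma factorPoly_injective : Function.Injective factorPoly := fun α β h =>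
  Finsupp.ext fun t => by simpa [coeff_factorPoly] using congrArg (coeff · t) h

lemma isFactorization_iff_aeval {α : ℕ →₀ ℕ} :
    IsFactorization r x α ↔ aeval r (factorPoly α) = x := by
  simp [IsFactorization, factorPoly, map_finsuppSum, aeval_monomial]

noncomputable def exchangePoly (r : ℚ) : ℤ[X] := C (r.den : ℤ) * X - C r.num

lemma exchangePoly_isPrimitive (r : ℚ) : (exchangePoly r).IsPrimitive := by
  refine isPrimitive_iff_isUnit_of_C_dvd.2 fun c hc => ?_
  simp only [C_dvd_iff_dvd_coeff, exchangePoly, coeff_sub, coeff_C_mul_X, coeff_C] at hc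
  have hden : c ∣ r.den := by simpa using hc 1
  have hnum : c ∣ r.num := by simpa using hc 0
  exact (Rat.isCoprime_num_den r).isUnit_of_dvd' hnum hden

lemma exchangePoly_dvd_of_aeval_eq_zero {p : ℤ[X]} (hp : aeval r p = 0) :
    exchangePoly r ∣ p := by
  rw [IsPrimitive.Int.dvd_iff_map_cast_dvd_map_cast _ _ (exchangePoly_isPrimitive r)]
  have hmap : (exchangePoly r).map (Int.castRingHom ℚ) = C (r.den : ℚ) * (X - C r) := by
    rw [exchangePoly, Polynomial.map_sub, Polynomial.map_mul, map_C, map_C, map_X, mul_sub,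
      ← C_mul]
    simp
  rw [hmap]
  refine (IsUnit.mul_left_dvd (isUnit_C.2 ?_)).2 (dvd_iff_isRoot.2 ?_)
  · exact isUnit_iff_ne_zero.2 (by exact_mod_cast r.den_nz)
  · rwa [IsRoot, eval_map, ← algebraMap_int_eq, ← aeval_def]

lemma exchangePoly_eq_linear (r : ℚ) : exchangePoly r = C (r.den : ℤ) * X + C (-r.num) := by
  rw [exchangePoly, C_neg, sub_eq_add_neg]

lemma natDegree_exchangePoly (r : ℚ) : (exchangePoly r).natDegree = 1 := by
  rw [exchangePoly_eq_linear, natDegree_linear (by exact_mod_cast r.den_nz)]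

lemma leadingCoeff_exchangePoly (r : ℚ) : (exchangePoly r).leadingCoeff = r.den := by
  rw [exchangePoly_eq_linear, leadingCoeff_linear (by exact_mod_cast r.den_nz)]

lemma trailingCoeff_exchangePoly (hr : r ≠ 0) : (exchangePoly r).trailingCoeff = -r.num := by
  have hcoeff : (exchangePoly r).coeff 0 = -r.num := by simp [exchangePoly]
  rw [trailingCoeff_eq_coeff_zero (by simpa [hcoeff] using hr), hcoeff]

lemma num_dvd_trailingCoeff_of_dvd (hr : r ≠ 0) {p : ℤ[X]} (hp : exchangePoly r ∣ p) :
    r.num ∣ p.trailingCoeff := by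
  obtain ⟨q, rfl⟩ := hp
  rw [trailingCoeff_mul, trailingCoeff_exchangePoly hr, neg_mul]
  exact (dvd_mul_right _ _).neg_right

lemma den_dvd_leadingCoeff_of_dvd {p : ℤ[X]} (hp : exchangePoly r ∣ p) :
    (r.den : ℤ) ∣ p.leadingCoeff := by
  obtain ⟨q, rfl⟩ := hp
  rw [leadingCoeff_mul, leadingCoeff_exchangePoly]
  exact dvd_mul_right _ _

lemma one_le_natDegree_of_dvd {p : ℤ[X]} (hp : exchangePoly r ∣ p) (hp0 : p ≠ 0) :
    1 ≤ p.natDegree := by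
  obtain ⟨q, rfl⟩ := hp
  rw [natDegree_mul (left_ne_zero_of_mul hp0) (right_ne_zero_of_mul hp0), natDegree_exchangePoly]
  omega

lemma exchangePoly_dvd_factorPoly_sub {α β : ℕ →₀ ℕ} (hα : IsFactorization r x α)
    (hβ : IsFactorization r x β) : exchangePoly r ∣ factorPoly α - factorPoly β := by
  apply exchangePoly_dvd_of_aeval_eq_zero
  rw [map_sub, isFactorization_iff_aeval.1 hα, isFactorization_iff_aeval.1 hβ, sub_self]

end ExchangePolynomial

section Exchange

variable {r x : ℚ}

lemma natCast_num_toNat (h0 : 0 < r) : ((r.num.toNat : ℤ) : ℚ) = r.num := by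
  exact_mod_cast Int.toNat_of_nonneg (Rat.num_nonneg.2 h0.le)

lemma num_toNat_ne_den (h0 : 0 < r) (hd : r.den ≠ 1) : r.num.toNat ≠ r.den := by
  intro h
  have hnum := Rat.num_pos.2 h0
  have hcop := r.reduced
  rw [show r.num.natAbs = r.num.toNat by omega, h] at hcop
  exact hd ((Nat.coprime_self _).1 hcop)

lemma isFactorization_add_single_iff (h0 : 0 < r) (γ : ℕ →₀ ℕ) (i : ℕ) :
    IsFactorization r x (γ + Finsupp.single i r.num.toNat) ↔
      IsFactorization r x (γ + Finsupp.single (i + 1) r.den) := by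
  have hrel : (r.num.toNat : ℚ) * r ^ i = r.den * r ^ (i + 1) := by
    rw [pow_succ, mul_left_comm, Rat.den_mul_eq_num, mul_comm, ← natCast_num_toNat h0]
    norm_cast
  simp only [IsFactorization]
  rw [Finsupp.sum_add_index' (by simp) (by intros; push_cast; ring),
    Finsupp.sum_add_index' (by simp) (by intros; push_cast; ring),
    Finsupp.sum_single_index (by simp), Finsupp.sum_single_index (by simp), hrel]

lemma chainStep_exchange (h0 : 0 < r) {γ : ℕ →₀ ℕ} {i : ℕ}
    (h : IsFactorization r x (γ + Finsupp.single i r.num.toNat)) :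
    ChainStep r x (max r.num.toNat r.den) (γ + Finsupp.single i r.num.toNat)
      (γ + Finsupp.single (i + 1) r.den) :=
  ⟨h, (isFactorization_add_single_iff h0 γ i).1 h,
    (fdist_add_single_add_single γ (Nat.succ_ne_self i).symm _ _).le⟩

end Exchange

section Divisibility

variable {r x : ℚ} {α β : ℕ →₀ ℕ}

lemma exists_num_dvd_sub_of_ne (h0 : 0 < r) (hα : IsFactorization r x α)
    (hβ : IsFactorization r x β) (hne : α ≠ β) :
    ∃ i, α i ≠ β i ∧ (r.num.toNat : ℤ) ∣ (α i : ℤ) - β i := by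
  set δ := factorPoly α - factorPoly β
  have hδ : δ ≠ 0 := sub_ne_zero.2 (factorPoly_injective.ne hne)
  have hcoeff : δ.trailingCoeff = (α δ.natTrailingDegree : ℤ) - β δ.natTrailingDegree := by
    rw [trailingCoeff, coeff_sub, coeff_factorPoly, coeff_factorPoly]
  refine ⟨δ.natTrailingDegree, fun h => hδ ?_, ?_⟩
  · rw [← trailingCoeff_eq_zero, hcoeff, h, sub_self]
  · rw [← hcoeff, Int.toNat_of_nonneg (Rat.num_nonneg.2 h0.le)]
    exact num_dvd_trailingCoeff_of_dvd h0.ne' (exchangePoly_dvd_factorPoly_sub hα hβ)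

lemma exists_den_dvd_sub_of_ne (hα : IsFactorization r x α) (hβ : IsFactorization r x β)
    (hne : α ≠ β) : ∃ j, 0 < j ∧ α j ≠ β j ∧ (r.den : ℤ) ∣ (α j : ℤ) - β j := by
  set δ := factorPoly α - factorPoly β
  have hδ : δ ≠ 0 := sub_ne_zero.2 (factorPoly_injective.ne hne)
  have hdvd := exchangePoly_dvd_factorPoly_sub hα hβ
  have hcoeff : δ.leadingCoeff = (α δ.natDegree : ℤ) - β δ.natDegree := by
    rw [leadingCoeff, coeff_sub, coeff_factorPoly, coeff_factorPoly]
  refine ⟨δ.natDegree, one_le_natDegree_of_dvd hdvd hδ, fun h => hδ ?_,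
    hcoeff ▸ den_dvd_leadingCoeff_of_dvd hdvd⟩
  rw [← leadingCoeff_eq_zero, hcoeff, h, sub_self]

lemma le_fdist_of_dvd_sub {m t : ℕ} (hne : α t ≠ β t) (hdvd : (m : ℤ) ∣ (α t : ℤ) - β t) :
    m ≤ fdist α β :=
  (Int.natAbs_le_of_dvd_ne_zero hdvd (by omega)).trans (natAbs_sub_le_fdist α β t)

lemma eq_of_dvd_sub_of_lt {m a b : ℕ} (hdvd : (m : ℤ) ∣ (a : ℤ) - b) (ha : a < m) (hb : b < m) :
    a = b :=
  ((Nat.modEq_iff_dvd.2 hdvd).eq_of_lt_of_lt hb ha).symm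

lemma max_le_fdist (h0 : 0 < r) (hα : IsFactorization r x α) (hβ : IsFactorization r x β)
    (hne : α ≠ β) : max r.num.toNat r.den ≤ fdist α β := by
  obtain ⟨i, hi, hdvd_i⟩ := exists_num_dvd_sub_of_ne h0 hα hβ hne
  obtain ⟨j, -, hj, hdvd_j⟩ := exists_den_dvd_sub_of_ne hα hβ hne
  exact max_le (le_fdist_of_dvd_sub hi hdvd_i) (le_fdist_of_dvd_sub hj hdvd_j)

end Divisibility

section Connectedness

variable {r x : ℚ} {α β : ℕ →₀ ℕ}

lemma exists_eq_add_single_of_le {t c : ℕ} (h : c ≤ α t) : ∃ γ, α = γ + Finsupp.single t c :=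
  ⟨α - Finsupp.single t c, (tsub_add_cancel_of_le (Finsupp.single_le_iff.2 h)).symm⟩

lemma flen_add_single (γ : ℕ →₀ ℕ) (t c : ℕ) : flen (γ + Finsupp.single t c) = flen γ + c := by
  rw [flen_eq_degree, flen_eq_degree, map_add, Finsupp.degree_single]

lemma reflTransGen_of_den_lt_num (h0 : 0 < r) (hlt : r.den < r.num.toNat)
    (hα : IsFactorization r x α) (hβ : IsFactorization r x β) :
    ReflTransGen (ChainStep r x (max r.num.toNat r.den)) α β := by
  refine reflTransGen_of_descent flen (Red := fun α => ∀ t, α t < r.num.toNat) ?_ ?_ hα hβ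
  · intro α hα hred
    push Not at hred
    obtain ⟨t, ht⟩ := hred
    obtain ⟨γ, rfl⟩ := exists_eq_add_single_of_le ht
    have hstep := chainStep_exchange h0 hα
    refine ⟨_, hstep.2.1, hstep, ?_⟩
    rw [flen_add_single, flen_add_single]
    omega
  · intro α β hα hβ hredα hredβ
    by_contra hne
    obtain ⟨i, hi, hdvd⟩ := exists_num_dvd_sub_of_ne h0 hα hβ hne
    exact hi (eq_of_dvd_sub_of_lt hdvd (hredα i) (hredβ i))

lemma reflTransGen_of_num_lt_den (h0 : 0 < r) (hlt : r.num.toNat < r.den)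
    (hα : IsFactorization r x α) (hβ : IsFactorization r x β) :
    ReflTransGen (ChainStep r x (max r.num.toNat r.den)) α β := by
  refine reflTransGen_of_descent flen (Red := fun α => ∀ t, α (t + 1) < r.den) ?_ ?_ hα hβ
  · intro α hα hred
    push Not at hred
    obtain ⟨t, ht⟩ := hred
    obtain ⟨γ, rfl⟩ := exists_eq_add_single_of_le ht
    have hstep := chainStep_exchange h0 ((isFactorization_add_single_iff h0 γ t).2 hα)
    refine ⟨_, hstep.1, Std.Symm.symm _ _ hstep, ?_⟩
    rw [flen_add_single, flen_add_single]
    omega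
  · intro α β hα hβ hredα hredβ
    by_contra hne
    obtain ⟨j, hj, hj', hdvd⟩ := exists_den_dvd_sub_of_ne hα hβ hne
    obtain ⟨t, rfl⟩ : ∃ t, j = t + 1 := Nat.exists_eq_succ_of_ne_zero hj.ne'
    exact hj' (eq_of_dvd_sub_of_lt hdvd (hredα t) (hredβ t))

lemma hasChain_max (h0 : 0 < r) (hd : r.den ≠ 1) (hα : IsFactorization r x α)
    (hβ : IsFactorization r x β) : HasChain r x (max r.num.toNat r.den) α β :=
  .of_reflTransGen hβ <| (num_toNat_ne_den h0 hd).lt_or_gt.elim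
    (reflTransGen_of_num_lt_den h0 · hα hβ) (reflTransGen_of_den_lt_num h0 · hα hβ)

end Connectedness

section Catenary

variable {r x : ℚ}

lemma catenary_le_of_forall_hasChain {N : ℕ}
    (h : ∀ α β, IsFactorization r x α → IsFactorization r x β → HasChain r x N α β) :
    catenary r x ≤ N :=
  sInf_le ⟨N, rfl, h⟩

lemma le_catenary_of_forall_le_fdist {N : ℕ} {α β : ℕ →₀ ℕ} (hα : IsFactorization r x α)
    (hβ : IsFactorization r x β) (hne : α ≠ β)
    (h : ∀ α β, IsFactorization r x α → IsFactorization r x β → α ≠ β → N ≤ fdist α β) :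
    (N : ℕ∞) ≤ catenary r x := by
  refine le_sInf ?_
  rintro _ ⟨m, rfl, hchain⟩
  obtain ⟨k, z, hz0, hzl, hfac, hstep⟩ := hchain α β hα hβ
  obtain ⟨i, hi⟩ := Fin.exists_castSucc_ne_succ (hz0 ▸ hzl ▸ hne)
  exact_mod_cast (h _ _ (hfac _) (hfac _) hi).trans (hstep i)

lemma catenary_eq_zero_of_subsingleton
    (h : ∀ α β, IsFactorization r x α → IsFactorization r x β → α = β) : catenary r x = 0 :=
  nonpos_iff_eq_zero.1 <| catenary_le_of_forall_hasChain fun α β hα hβ =>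
    h α β hα hβ ▸ HasChain.refl hα

lemma catenary_eq_max (h0 : 0 < r) (hd : r.den ≠ 1) {α β : ℕ →₀ ℕ}
    (hα : IsFactorization r x α) (hβ : IsFactorization r x β) (hne : α ≠ β) :
    catenary r x = max r.num.toNat r.den :=
  le_antisymm (catenary_le_of_forall_hasChain fun _ _ => hasChain_max h0 hd)
    (le_catenary_of_forall_le_fdist hα hβ hne fun _ _ => max_le_fdist h0)

end Catenary

theorem stmt4_general (r : ℚ) (h0 : 0 < r) (hd : r.den ≠ 1) :
    (⨆ x ∈ S r, catenary r x) = ((max r.num.toNat r.den : ℕ) : ℕ∞) ∧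
    ∀ x ∈ S r, 0 < catenary r x → catenary r x = ((max r.num.toNat r.den : ℕ) : ℕ∞) := by
  have hnum : IsFactorization r r.num.toNat (0 + Finsupp.single 0 r.num.toNat) := by
    simp [IsFactorization]
  have hden := (isFactorization_add_single_iff h0 0 0).1 hnum
  have hne : 0 + Finsupp.single 0 r.num.toNat ≠ 0 + Finsupp.single 1 r.den := fun h => by
    have h₀ := DFunLike.congr_fun h 0
    simp at h₀
    exact h0.not_ge h₀
  have hmem : (r.num.toNat : ℚ) ∈ S r := by
    have hone : (1 : ℚ) ∈ S r := AddSubmonoid.subset_closure ⟨0, (pow_zero r).symm⟩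
    simpa using nsmul_mem hone r.num.toNat
  refine ⟨le_antisymm ?_ ?_, fun x _ hpos => ?_⟩
  · exact iSup₂_le fun x _ => catenary_le_of_forall_hasChain fun _ _ => hasChain_max h0 hd
  · exact (catenary_eq_max h0 hd hnum hden hne).ge.trans
      (le_iSup₂ (f := fun x _ => catenary r x) _ hmem)
  · by_contra hx
    refine hpos.ne' (catenary_eq_zero_of_subsingleton fun α β hα hβ => ?_)
    by_contra hne
    exact hx (catenary_eq_max h0 hd hα hβ hne)

theorem stmt4 (r : ℚ) (h0 : 0 < r) (hd : r.den ≠ 1) (hn : 1 < r.num) :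
    (⨆ x ∈ S r, catenary r x) = ((max r.num.toNat r.den : ℕ) : ℕ∞) ∧
    ∀ x ∈ S r, 0 < catenary r x → catenary r x = ((max r.num.toNat r.den : ℕ) : ℕ∞) :=
  stmt4_general r h0 hd
end

section
/- Let r ∈ ℚ_{>0} be such that S_r is atomic (i.e., r = 1 or n(r) > 1). Then the following are equivalent: (1) r ∈ ℕ; (2) ρ(S_r) = 1; (3) ρ(S_r) < ∞. Consequently, either ρ(S_r) = 1 or ρ(S_r) = ∞. -/
/-!
If `r = m ∈ ℕ`, then `S_r = ℕ` and its only atom is `1`, so every element has exactly one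
length. Otherwise `r = n / d` in lowest terms with `n, d ≥ 2`, and every power `r ^ k` is an atom:
a representation `r ^ k = ∑ cᵢ rⁱ` with `cᵢ ∈ ℕ` must be the trivial one. Indeed, the rational root
theorem gives `n ∣ c₀`, so the constant term equals `(c₀ d / n) · r` and can be carried into the
degree-one coefficient; induction on `k` finishes. Hence `n ^ k = n ^ k • 1 = d ^ k • r ^ k` has
factorizations of lengths `n ^ k` and `d ^ k`, whose ratio is unbounded.
-/

open Finsupp
open scoped ENNReal

open Classical in
/-- The elasticity of `x` in `S_r` (as an extended nonnegative real). -/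
noncomputable def elast (r x : ℚ) : ℝ≥0∞ :=
  if x = 0 then 1
  else if BddAbove (atomLengthSet r x) then
    (↑(sSup (atomLengthSet r x)) : ℝ≥0∞) / (↑(sInf (atomLengthSet r x)) : ℝ≥0∞)
  else ⊤

/-- The elasticity of the monoid `S_r`. -/
noncomputable def elastM (r : ℚ) : ℝ≥0∞ := ⨆ x ∈ S r, elast r x

open Polynomial

lemma pow_mem_S (r : ℚ) (k : ℕ) : r ^ k ∈ S r :=
  AddSubmonoid.subset_closure ⟨k, rfl⟩

lemma natCast_mem_S (r : ℚ) (N : ℕ) : (N : ℚ) ∈ S r := by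
  simpa using AddSubmonoid.nsmul_mem _ (pow_mem_S r 0) N

lemma aeval_eq_mul_aeval_divX_add (r : ℚ) (p : ℕ[X]) :
    aeval r p = r * aeval r p.divX + p.coeff 0 := by
  conv_lhs => rw [← X_mul_divX_add p]
  simp

lemma eq_zero_or_eq_zero_of_add_eq_X_pow {p q : ℕ[X]} {k : ℕ} (h : p + q = X ^ k) :
    p = 0 ∨ q = 0 := by
  have hcoeff (i : ℕ) : p.coeff i + q.coeff i = if i = k then 1 else 0 := by
    simpa [coeff_X_pow] using congrArg (coeff · i) h
  have hk : p.coeff k = 0 ∨ q.coeff k = 0 := by have := hcoeff k; rw [if_pos rfl] at this; omega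
  refine hk.imp (fun hk => ?_) (fun hk => ?_) <;> ext i <;> have := hcoeff i <;>
    split_ifs at this with hik
  all_goals first | (subst hik; simpa using hk) | (rw [coeff_zero]; omega)

lemma ENNReal.eq_top_of_forall_natCast_pow_div_le {e : ℝ≥0∞} {a b : ℕ} (hab : b < a)
    (h : ∀ k, ((a ^ k : ℕ) : ℝ≥0∞) / (b ^ k : ℕ) ≤ e) : e = ⊤ := by
  have hpow (k : ℕ) : ((a : ℝ≥0∞) / b) ^ k ≤ e := by
    simpa [div_eq_mul_inv, mul_pow, ENNReal.inv_pow] using h k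
  have hgt : 1 < (a : ℝ≥0∞) / b := by
    rw [ENNReal.lt_div_iff_mul_lt (.inr ENNReal.one_ne_top) (.inl (ENNReal.natCast_ne_top b)),
      one_mul]
    exact_mod_cast hab
  exact top_unique (le_of_tendsto' (ENNReal.tendsto_pow_atTop_nhds_top_iff.mpr hgt) hpow)

section

variable {r : ℚ}

lemma exists_aeval_eq_of_mem_S {x : ℚ} (hx : x ∈ S r) : ∃ p : ℕ[X], aeval r p = x := by
  induction hx using AddSubmonoid.closure_induction with
  | mem _ h => obtain ⟨n, rfl⟩ := h; exact ⟨X ^ n, by simp⟩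
  | zero => exact ⟨0, by simp⟩
  | add _ _ _ _ hy hz =>
    obtain ⟨p, rfl⟩ := hy
    obtain ⟨q, rfl⟩ := hz
    exact ⟨p + q, by simp⟩

lemma aeval_nonneg (hr : 0 ≤ r) (p : ℕ[X]) : 0 ≤ aeval r p := by
  rw [aeval_eq_sum_range]
  positivity

lemma aeval_eq_zero_iff_of_pos (hr : 0 < r) {p : ℕ[X]} : aeval r p = 0 ↔ p = 0 := by
  refine ⟨fun h => ?_, fun h => by simp [h]⟩
  rw [aeval_eq_sum_range, Finset.sum_eq_zero_iff_of_nonneg (fun i _ => by positivity)] at h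
  ext i
  rcases le_or_gt i p.natDegree with hi | hi
  · simpa [hr.ne'] using h i (Finset.mem_range_succ_iff.mpr hi)
  · exact coeff_eq_zero_of_natDegree_lt hi

lemma Rat.num_dvd_of_eq_mul_aeval {c : ℤ} {q : ℤ[X]} (h : (c : ℚ) = r * aeval r q) :
    r.num ∣ c := by
  have hroot : aeval r (X * q - C c) = 0 := by simp [← h]
  simpa using (Rat.isFractionRingNum r).symm.dvd.trans (num_dvd_of_is_root hroot)

lemma Rat.natAbs_num_eq_mul_den (hr : 0 ≤ r) : (r.num.natAbs : ℚ) = r * r.den := by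
  rw [Nat.cast_natAbs, Int.cast_abs, abs_of_nonneg (by exact_mod_cast Rat.num_nonneg.mpr hr),
    Rat.mul_den_eq_num]

theorem eq_X_pow_of_aeval_eq_pow (hn : 1 < r.num) (hd : 1 < r.den) {k : ℕ} {p : ℕ[X]}
    (h : aeval r p = r ^ k) : p = X ^ k := by
  have hr : 0 < r := Rat.num_pos.mp (by omega)
  induction k generalizing p with
  | zero =>
    rw [aeval_eq_mul_aeval_divX_add, pow_zero] at h
    have hdvd : r.num ∣ (p.coeff 0 : ℤ) - 1 :=
      Rat.num_dvd_of_eq_mul_aeval (q := -p.divX.map (algebraMap ℕ ℤ))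
        (by
          simp only [Int.cast_sub, Int.cast_natCast, Int.cast_one, aeval_neg, aeval_map_algebraMap,
            mul_neg]
          linarith)
    have hc : p.coeff 0 ≤ 1 := by
      have : 0 ≤ r * aeval r p.divX := mul_nonneg hr.le (aeval_nonneg hr.le _)
      exact_mod_cast (by linarith : (p.coeff 0 : ℚ) ≤ 1)
    have hc1 : p.coeff 0 = 1 := by
      by_contra hne
      rw [show p.coeff 0 = 0 by omega] at hdvd
      have := Int.le_of_dvd one_pos (by simpa using hdvd)
      omega
    have hdivX : p.divX = 0 := by
      rw [← aeval_eq_zero_iff_of_pos hr]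
      rw [hc1, Nat.cast_one] at h
      exact (mul_eq_zero.mp (by linarith)).resolve_left hr.ne'
    rw [← X_mul_divX_add p, hdivX, hc1]
    simp
  | succ k ih =>
    rw [aeval_eq_mul_aeval_divX_add, pow_succ'] at h
    have hdvd : r.num ∣ (p.coeff 0 : ℤ) :=
      Rat.num_dvd_of_eq_mul_aeval (q := X ^ k - p.divX.map (algebraMap ℕ ℤ))
        (by
          simp only [Int.cast_natCast, aeval_sub, map_pow, aeval_X, aeval_map_algebraMap]
          linarith)
    obtain ⟨t, ht⟩ : r.num.natAbs ∣ p.coeff 0 := by simpa using Int.natAbs_dvd_natAbs.mpr hdvd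
    have hcarry : aeval r (p.divX + C (r.den * t)) = r ^ k := by
      apply mul_left_cancel₀ hr.ne'
      rw [ht, Nat.cast_mul, Rat.natAbs_num_eq_mul_den hr.le] at h
      simp only [map_add, eq_natCast, map_mul, map_natCast]
      linear_combination h
    have hrec := ih hcarry
    have ht0 : t = 0 := by
      by_contra hne
      have hcoeff := congrArg (coeff · 0) hrec
      simp only [coeff_add, coeff_divX, coeff_C_zero, coeff_X_pow] at hcoeff
      have := Nat.le_mul_of_pos_right r.den (Nat.pos_of_ne_zero hne)
      split_ifs at hcoeff <;> omega
    rw [ht0, mul_zero, map_zero, add_zero] at hrec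
    rw [← X_mul_divX_add p, ht, ht0, mul_zero, map_zero, add_zero, hrec, pow_succ']

theorem isAtomS_pow (hn : 1 < r.num) (hd : 1 < r.den) (k : ℕ) : IsAtomS r (r ^ k) := by
  have hr : 0 < r := Rat.num_pos.mp (by omega)
  refine ⟨pow_mem_S r k, pow_ne_zero k hr.ne', ?_⟩
  rintro ⟨_, _, hy, hz, hy0, hz0, hsum⟩
  obtain ⟨p, rfl⟩ := exists_aeval_eq_of_mem_S hy
  obtain ⟨q, rfl⟩ := exists_aeval_eq_of_mem_S hz
  rcases eq_zero_or_eq_zero_of_add_eq_X_pow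
      (eq_X_pow_of_aeval_eq_pow hn hd (p := p + q) (by rw [map_add, hsum])) with rfl | rfl
  · exact hy0 (map_zero _)
  · exact hz0 (map_zero _)

lemma natCast_mul_mem_atomLengthSet {a : ℚ} (ha : IsAtomS r a) (t : ℕ) :
    t ∈ atomLengthSet r (t * a) :=
  ⟨fun _ => a, fun _ => ha, by simp⟩

lemma natCast_div_le_elast {x : ℚ} (hx : x ≠ 0) {s t : ℕ} (hs : s ∈ atomLengthSet r x)
    (ht : t ∈ atomLengthSet r x) : (s : ℝ≥0∞) / t ≤ elast r x := by
  rw [elast, if_neg hx]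
  split_ifs with hb
  · exact ENNReal.div_le_div (by exact_mod_cast le_csSup hb hs) (by exact_mod_cast Nat.sInf_le ht)
  · exact le_top

lemma elast_le_elastM {x : ℚ} (hx : x ∈ S r) : elast r x ≤ elastM r :=
  le_iSup₂ (f := fun x _ => elast r x) x hx

theorem elastM_eq_top (hn : 1 < r.num) (hd : 1 < r.den) : elastM r = ⊤ := by
  have hr : 0 < r := Rat.num_pos.mp (by omega)
  have hnd : r.num.natAbs ≠ r.den := by
    intro h
    have hcop := r.reduced
    rw [h, Nat.coprime_self] at hcop
    omega
  have hmem (k c : ℕ) (hc : c = r.num.natAbs ∨ c = r.den) :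
      c ^ k ∈ atomLengthSet r ((r.num.natAbs : ℚ) ^ k) := by
    rcases hc with rfl | rfl
    · convert natCast_mul_mem_atomLengthSet (by simpa using isAtomS_pow hn hd 0) _ using 1
      simp
    · convert natCast_mul_mem_atomLengthSet (isAtomS_pow hn hd k) (r.den ^ k) using 1
      rw [Rat.natAbs_num_eq_mul_den hr.le]
      push_cast
      rw [mul_pow, mul_comm]
  have hle (k a b : ℕ) (ha : a = r.num.natAbs ∨ a = r.den) (hb : b = r.num.natAbs ∨ b = r.den) :
      ((a ^ k : ℕ) : ℝ≥0∞) / (b ^ k : ℕ) ≤ elastM r :=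
    (natCast_div_le_elast (by positivity) (hmem k a ha) (hmem k b hb)).trans
      (elast_le_elastM (by exact_mod_cast natCast_mem_S r _))
  rcases hnd.lt_or_gt with h | h
  · exact ENNReal.eq_top_of_forall_natCast_pow_div_le h fun k => hle k _ _ (.inr rfl) (.inl rfl)
  · exact ENNReal.eq_top_of_forall_natCast_pow_div_le h fun k => hle k _ _ (.inl rfl) (.inr rfl)

end

section

variable (m : ℕ)

lemma exists_natCast_eq_of_mem_S_natCast {x : ℚ} (hx : x ∈ S m) : ∃ N : ℕ, x = N := by
  obtain ⟨p, rfl⟩ := exists_aeval_eq_of_mem_S hx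
  exact ⟨aeval m p, by simpa using aeval_algebraMap_apply ℚ m p⟩

lemma isAtomS_natCast_iff {a : ℚ} : IsAtomS m a ↔ a = 1 := by
  constructor
  · rintro ⟨ha, ha0, hsplit⟩
    obtain ⟨N, rfl⟩ := exists_natCast_eq_of_mem_S_natCast m ha
    by_contra hN1
    have hN : 2 ≤ N := by
      by_contra!
      interval_cases N <;> simp_all
    exact hsplit ⟨1, (N - 1 : ℕ), by simpa using natCast_mem_S m 1, natCast_mem_S m _,
      one_ne_zero, Nat.cast_ne_zero.mpr (by omega),
      by push_cast [Nat.cast_sub (by omega : 1 ≤ N)]; ring⟩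
  · rintro rfl
    refine ⟨by simpa using natCast_mem_S m 1, one_ne_zero, ?_⟩
    rintro ⟨_, _, hy, hz, hy0, hz0, hsum⟩
    obtain ⟨Ny, rfl⟩ := exists_natCast_eq_of_mem_S_natCast m hy
    obtain ⟨Nz, rfl⟩ := exists_natCast_eq_of_mem_S_natCast m hz
    have : 1 = Ny + Nz := by exact_mod_cast hsum
    simp only [ne_eq, Nat.cast_eq_zero] at hy0 hz0
    omega

lemma atomLengthSet_natCast (N : ℕ) : atomLengthSet m N = {N} := by
  ext t
  constructor
  · rintro ⟨f, hf, hsum⟩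
    simp only [(isAtomS_natCast_iff m).mp (hf _), Finset.sum_const, Finset.card_univ,
      Fintype.card_fin, nsmul_eq_mul, mul_one, Nat.cast_inj] at hsum
    exact hsum
  · intro ht
    rw [Set.mem_singleton_iff.mp ht]
    simpa using natCast_mul_mem_atomLengthSet ((isAtomS_natCast_iff m).mpr rfl) N

lemma elast_natCast (N : ℕ) : elast m N = 1 := by
  rcases eq_or_ne N 0 with rfl | hN
  · simp [elast]
  · rw [elast, if_neg (by exact_mod_cast hN), atomLengthSet_natCast, if_pos bddAbove_singleton,
      csSup_singleton, csInf_singleton]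
    exact ENNReal.div_self (by exact_mod_cast hN) (ENNReal.natCast_ne_top N)

theorem elastM_natCast : elastM m = 1 := by
  refine le_antisymm (iSup₂_le fun x hx => ?_) ?_
  · obtain ⟨N, rfl⟩ := exists_natCast_eq_of_mem_S_natCast m hx
    exact (elast_natCast m N).le
  · simpa only [elast_natCast] using elast_le_elastM (natCast_mem_S m 0)

end

theorem stmt5_general (r : ℚ) (hat : r = 1 ∨ 1 < r.num) :
    ((∃ m : ℕ, r = m) ↔ elastM r = 1) ∧
    ((elastM r = 1) ↔ elastM r < ⊤) ∧
    (elastM r = 1 ∨ elastM r = ⊤) := by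
  by_cases hnat : ∃ m : ℕ, r = m
  · obtain ⟨m, rfl⟩ := hnat
    simp [elastM_natCast]
  · have hn : 1 < r.num := hat.resolve_left fun h => hnat ⟨1, by simp [h]⟩
    have hd : 1 < r.den := by
      by_contra! hd
      have hden : r.den = 1 := by have := r.den_pos; omega
      exact hnat ⟨r.num.toNat, (r.den_eq_one_iff.mp hden).symm.trans
        (by exact_mod_cast (Int.toNat_of_nonneg (by omega)).symm)⟩
    simp [elastM_eq_top hn hd, hnat]

theorem stmt5 (r : ℚ) (h0 : 0 < r) (hat : r = 1 ∨ 1 < r.num) :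
    ((∃ m : ℕ, r = m) ↔ elastM r = 1) ∧
    ((elastM r = 1) ↔ elastM r < ⊤) ∧
    (elastM r = 1 ∨ elastM r = ⊤) :=
  stmt5_general r hat
end

section
/- Let r ∈ ℚ_{>0} \ ℕ with n(r) = d(r) + 1 (so r > 1 and S_r is atomic). Then ρ(x) < ∞ for every x ∈ S_r, and for every rational q ≥ 1 there exists x ∈ S_r with ρ(x) = q; that is, the set of elasticities R(S_r) = { ρ(x) : x ∈ S_r } equals ℚ ∩ [1, ∞), so S_r is fully elastic. -/
open Finsupp
open scoped ENNReal

/-!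
Write `d = r.den`, so that `d * r = d + 1`. A factorization of `x ∈ S_r` is an
`α : ℕ →₀ ℕ` with `∑ α i * r ^ i = x`; the atoms of `S_r` are exactly the powers of `r`, so these
are its factorizations into atoms. The relation `(d + 1) r ^ i = d r ^ (i + 1)` trades `d + 1`
copies of `r ^ i` for `d` copies of `r ^ (i + 1)` and back, changing the length by one. Carrying as
long as possible ends in a *reduced* factorization (all coefficients `≤ d`); borrowing as long as
possible (lengths are bounded by `x` since `r ≥ 1`) ends in an *expanded* one (coefficients `< d`
in positive degrees). By the rational root theorem, applied to the difference of two
factorizations of `x`, `d + 1` divides its lowest and `d` its highest nonzero coefficient, so both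
normal forms are unique. Hence they have the least and the greatest length, and `ρ(x)` is a
rational number `≥ 1`. Conversely, `d r ^ (m + 1) = (d + 1) + r + ⋯ + r ^ m` has elasticity
`(d + 1 + m) / d`, and adding `k` further distinct powers of `r` to it gives
`(d + 1 + m + k) / (d + k)`, which is any rational `p / q > 1` for suitable `m` and `k`.
-/

open Polynomial

theorem Polynomial.den_dvd_leadingCoeff_of_aeval_eq_zero {P : ℤ[X]} {r : ℚ}
    (hP : aeval r P = 0) : (r.den : ℤ) ∣ P.leadingCoeff := by
  rw [← r.isFractionRingDen, Int.natCast_natAbs, abs_dvd]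
  exact den_dvd_of_is_root hP

theorem Polynomial.num_dvd_trailingCoeff_of_aeval_eq_zero {P : ℤ[X]} {r : ℚ} (hr : r ≠ 0)
    (hP : aeval r P = 0) : r.num ∣ P.trailingCoeff := by
  let := invertibleOfNonzero hr
  have hrev : aeval r⁻¹ P.reverse = 0 := by
    rw [aeval_def, ← invOf_eq_inv, eval₂_reverse_eq_zero_iff, ← aeval_def, hP]
  have := den_dvd_leadingCoeff_of_aeval_eq_zero hrev
  rwa [reverse_leadingCoeff, Rat.den_inv_of_ne_zero hr, Int.natCast_natAbs, abs_dvd] at this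

lemma ENNReal.natCast_div_natCast_eq_ofReal (a : ℕ) {b : ℕ} (hb : 0 < b) :
    (a : ℝ≥0∞) / b = ENNReal.ofReal ((a / b : ℚ) : ℝ) := by
  rw [Rat.cast_div, Rat.cast_natCast, Rat.cast_natCast,
    ENNReal.ofReal_div_of_pos (by exact_mod_cast hb), ENNReal.ofReal_natCast,
    ENNReal.ofReal_natCast]

namespace PuiseuxMonoid

noncomputable def factorValue (r : ℚ) : (ℕ →₀ ℕ) →ₗ[ℕ] ℚ := linearCombination ℕ (r ^ ·)

lemma isFactorization_iff {r x : ℚ} {α : ℕ →₀ ℕ} :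
    IsFactorization r x α ↔ factorValue r α = x := by
  simp [IsFactorization, factorValue, linearCombination_apply, nsmul_eq_mul]

lemma factorValue_single (r : ℚ) (i c : ℕ) : factorValue r (single i c) = c * r ^ i := by
  simp [factorValue, nsmul_eq_mul]

lemma factorValue_eq_sum_toMultiset (r : ℚ) (α : ℕ →₀ ℕ) :
    factorValue r α = (α.toMultiset.map (r ^ ·)).sum := by
  rw [toMultiset_map, sum_toMultiset, sum_mapDomain_index (by simp) (by simp [add_smul])]
  rfl

lemma mem_S_iff {r x : ℚ} : x ∈ S r ↔ ∃ α, factorValue r α = x := by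
  have : {x : ℚ | ∃ n : ℕ, x = r ^ n} = Set.range (r ^ ·) := by ext; simp [eq_comm]
  rw [S, this, ← Submodule.span_nat_eq_addSubmonoidClosure, Submodule.mem_toAddSubmonoid,
    mem_span_range_iff_exists_finsupp]
  rfl

lemma flen_eq_degree (α : ℕ →₀ ℕ) : flen α = α.degree := rfl

lemma flen_add (α β : ℕ →₀ ℕ) : flen (α + β) = flen α + flen β := map_add Finsupp.degree α β

lemma flen_single (i c : ℕ) : flen (single i c) = c := Finsupp.degree_single i c

lemma flen_eq_zero_iff {α : ℕ →₀ ℕ} : flen α = 0 ↔ α = 0 := Finsupp.degree_eq_zero_iff α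

noncomputable def ones (s : Finset ℕ) : ℕ →₀ ℕ := ∑ i ∈ s, single i 1

lemma ones_apply (s : Finset ℕ) (i : ℕ) : ones s i = if i ∈ s then 1 else 0 := by
  simp [ones, finsetSum_apply, single_apply]

lemma flen_ones (s : Finset ℕ) : flen (ones s) = s.card := by
  simp [ones, flen_eq_degree, map_sum]

lemma factorValue_ones (r : ℚ) (s : Finset ℕ) : factorValue r (ones s) = ∑ i ∈ s, r ^ i := by
  simp [ones, map_sum, factorValue_single]

lemma exists_exchange {r : ℚ} {α s t : ℕ →₀ ℕ} (hs : s ≤ α)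
    (h : factorValue r s = factorValue r t) :
    ∃ β, factorValue r β = factorValue r α ∧ flen β + flen s = flen α + flen t := by
  refine ⟨α - s + t, ?_, ?_⟩ <;> conv_rhs => rw [← tsub_add_cancel_of_le hs]
  · rw [map_add, map_add, h]
  · rw [flen_add, flen_add]
    ring

noncomputable def toPoly (α : ℕ →₀ ℕ) : ℤ[X] := α.sum fun i c => monomial i (c : ℤ)

@[simp] lemma coeff_toPoly (α : ℕ →₀ ℕ) (i : ℕ) : (toPoly α).coeff i = α i := by
  simp +contextual [toPoly, Finsupp.sum, coeff_monomial]

lemma aeval_toPoly (r : ℚ) (α : ℕ →₀ ℕ) : aeval r (toPoly α) = factorValue r α := by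
  simp [toPoly, factorValue, linearCombination_apply, map_finsuppSum, nsmul_eq_mul]

lemma toPoly_sub_toPoly_ne_zero {α β : ℕ →₀ ℕ} (h : α ≠ β) : toPoly α - toPoly β ≠ 0 := by
  refine fun h0 => h (Finsupp.ext fun i => ?_)
  simpa [sub_eq_zero] using congr_arg (coeff · i) h0

def IsReduced (r : ℚ) (α : ℕ →₀ ℕ) : Prop := ∀ i, α i ≤ r.den

def IsExpanded (r : ℚ) (α : ℕ →₀ ℕ) : Prop := ∀ i, 0 < i → α i < r.den

lemma IsExpanded.eq {r : ℚ} {α β : ℕ →₀ ℕ} (hα : IsExpanded r α) (hβ : IsExpanded r β)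
    (h : factorValue r α = factorValue r β) : α = β := by
  by_contra hne
  set P := toPoly α - toPoly β
  have hP : P ≠ 0 := toPoly_sub_toPoly_ne_zero hne
  have hroot : aeval r P = 0 := by simp [P, aeval_toPoly, h]
  have hcoeff (i : ℕ) : P.coeff i = α i - β i := by simp [P]
  rcases Nat.eq_zero_or_pos P.natDegree with hdeg | hdeg
  · rw [eq_C_of_natDegree_eq_zero hdeg, aeval_C, algebraMap_int_eq, eq_intCast,
      Int.cast_eq_zero] at hroot
    exact hP (by rw [eq_C_of_natDegree_eq_zero hdeg, hroot, C_0])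
  · have hlt : |P.leadingCoeff| < r.den := by
      have := hα _ hdeg
      have := hβ _ hdeg
      rw [abs_lt, leadingCoeff, hcoeff]
      omega
    exact hP (leadingCoeff_eq_zero.1 (Int.eq_zero_of_abs_lt_dvd
      (den_dvd_leadingCoeff_of_aeval_eq_zero hroot) hlt))

section
variable {r : ℚ} (hr : r.num = r.den + 1)
include hr

lemma den_mul_eq_den_add_one : (r.den : ℚ) * r = r.den + 1 := by
  rw [mul_comm, Rat.mul_den_eq_num, hr]
  push_cast
  rfl

lemma one_le_of_num_eq : 1 ≤ r := by
  have := den_mul_eq_den_add_one hr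
  have : (0 : ℚ) < r.den := by exact_mod_cast r.pos
  nlinarith

lemma IsReduced.eq {α β : ℕ →₀ ℕ} (hα : IsReduced r α) (hβ : IsReduced r β)
    (h : factorValue r α = factorValue r β) : α = β := by
  by_contra hne
  set P := toPoly α - toPoly β
  have hroot : aeval r P = 0 := by simp [P, aeval_toPoly, h]
  have hcoeff (i : ℕ) : P.coeff i = α i - β i := by simp [P]
  have hlt : |P.trailingCoeff| < r.num := by
    have := hα P.natTrailingDegree
    have := hβ P.natTrailingDegree
    rw [hr, abs_lt, trailingCoeff, hcoeff]
    omega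
  have hdvd := num_dvd_trailingCoeff_of_aeval_eq_zero (by linarith [one_le_of_num_eq hr]) hroot
  exact toPoly_sub_toPoly_ne_zero hne
    (trailingCoeff_eq_zero.1 (Int.eq_zero_of_abs_lt_dvd hdvd hlt))

lemma factorValue_single_succ (i : ℕ) :
    factorValue r (single (i + 1) r.den) = factorValue r (single i (r.den + 1)) := by
  rw [factorValue_single, factorValue_single, pow_succ, ← mul_assoc, mul_right_comm,
    den_mul_eq_den_add_one hr]
  push_cast
  ring

lemma den_mul_pow_succ (m : ℕ) :
    (r.den : ℚ) * r ^ (m + 1) = r.den + 1 + ∑ i ∈ Finset.Ico 1 (m + 1), r ^ i := by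
  induction m with
  | zero => simpa using den_mul_eq_den_add_one hr
  | succ m ih =>
    rw [Finset.sum_Ico_succ_top (by omega)]
    linear_combination r ^ (m + 1) * den_mul_eq_den_add_one hr + ih

lemma flen_le_factorValue (α : ℕ →₀ ℕ) : (flen α : ℚ) ≤ factorValue r α := by
  rw [flen_eq_degree, Finsupp.degree_apply, Nat.cast_sum, factorValue, linearCombination_apply,
    Finsupp.sum]
  gcongr with i
  rw [nsmul_eq_mul]
  exact le_mul_of_one_le_right (Nat.cast_nonneg _) (one_le_pow₀ (one_le_of_num_eq hr))

lemma factorValue_eq_zero_iff {α : ℕ →₀ ℕ} : factorValue r α = 0 ↔ α = 0 := by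
  refine ⟨fun h => ?_, fun h => h ▸ map_zero _⟩
  have := flen_le_factorValue hr α
  rw [h] at this
  rw [← flen_eq_zero_iff]
  exact_mod_cast this.antisymm (Nat.cast_nonneg _)

lemma exists_carry {α : ℕ →₀ ℕ} {i : ℕ} (hi : r.den + 1 ≤ α i) :
    ∃ β, factorValue r β = factorValue r α ∧ flen β + 1 = flen α := by
  obtain ⟨β, hβ, hlen⟩ :=
    exists_exchange (single_le_iff.2 hi) (factorValue_single_succ hr i).symm
  rw [flen_single, flen_single] at hlen
  exact ⟨β, hβ, by omega⟩

lemma exists_borrow {α : ℕ →₀ ℕ} {i : ℕ} (hi : r.den ≤ α (i + 1)) :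
    ∃ β, factorValue r β = factorValue r α ∧ flen β = flen α + 1 := by
  obtain ⟨β, hβ, hlen⟩ := exists_exchange (single_le_iff.2 hi) (factorValue_single_succ hr i)
  rw [flen_single, flen_single] at hlen
  exact ⟨β, hβ, by omega⟩

theorem exists_isReduced (α : ℕ →₀ ℕ) :
    ∃ β, factorValue r β = factorValue r α ∧ flen β ≤ flen α ∧ IsReduced r β := by
  by_cases hα : IsReduced r α
  · exact ⟨α, rfl, le_rfl, hα⟩
  obtain ⟨i, hi⟩ : ∃ i, r.den + 1 ≤ α i := by simpa [IsReduced] using hα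
  obtain ⟨β, hβ, hlen⟩ := exists_carry hr hi
  obtain ⟨γ, hγ, hlen', hred⟩ := exists_isReduced β
  exact ⟨γ, hγ.trans hβ, by omega, hred⟩
termination_by flen α

theorem exists_isExpanded (α : ℕ →₀ ℕ) :
    ∃ β, factorValue r β = factorValue r α ∧ flen α ≤ flen β ∧ IsExpanded r β := by
  by_cases hα : IsExpanded r α
  · exact ⟨α, rfl, le_rfl, hα⟩
  obtain ⟨i, hi⟩ : ∃ i, r.den ≤ α (i + 1) := by
    simp only [IsExpanded, not_forall, not_lt] at hα
    obtain ⟨i, hi0, hi⟩ := hα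
    exact ⟨i - 1, by rwa [Nat.sub_add_cancel hi0]⟩
  obtain ⟨β, hβ, hlen⟩ := exists_borrow hr hi
  have hbound : flen β ≤ ⌊factorValue r α⌋₊ := Nat.le_floor (hβ ▸ flen_le_factorValue hr β)
  obtain ⟨γ, hγ, hlen', hexp⟩ := exists_isExpanded β
  exact ⟨γ, hγ.trans hβ, by omega, hexp⟩
termination_by ⌊factorValue r α⌋₊ - flen α
decreasing_by rw [hβ]; omega

lemma IsReduced.flen_le {α β : ℕ →₀ ℕ} (hβ : IsReduced r β)
    (h : factorValue r α = factorValue r β) : flen β ≤ flen α := by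
  obtain ⟨β', hβ', hlen, hred⟩ := exists_isReduced hr α
  rwa [hred.eq hr hβ (hβ'.trans h)] at hlen

lemma IsExpanded.le_flen {α γ : ℕ →₀ ℕ} (hγ : IsExpanded r γ)
    (h : factorValue r α = factorValue r γ) : flen α ≤ flen γ := by
  obtain ⟨γ', hγ', hlen, hexp⟩ := exists_isExpanded hr α
  rwa [hexp.eq hγ (hγ'.trans h)] at hlen

lemma IsAtomS.exists_eq_pow {a : ℚ} (ha : IsAtomS r a) : ∃ k : ℕ, a = r ^ k := by
  obtain ⟨⟨α, rfl⟩, ha0, hirr⟩ := And.imp_left mem_S_iff.1 ha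
  obtain ⟨i, hi⟩ := support_nonempty_iff.2 (mt (factorValue_eq_zero_iff hr).2 ha0)
  have hle : single i 1 ≤ α := single_le_iff.2 (Nat.one_le_iff_ne_zero.2 (mem_support_iff.1 hi))
  have hsplit : factorValue r α = r ^ i + factorValue r (α - single i 1) := by
    conv_lhs => rw [← add_tsub_cancel_of_le hle]
    rw [map_add, factorValue_single, Nat.cast_one, one_mul]
  by_cases hrest : α - single i 1 = 0
  · exact ⟨i, by rw [hsplit, hrest, map_zero, add_zero]⟩
  · exact (hirr ⟨_, _, mem_S_iff.2 ⟨single i 1, by simp [factorValue_single]⟩,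
      mem_S_iff.2 ⟨_, rfl⟩, pow_ne_zero i (by linarith [one_le_of_num_eq hr]),
      mt (factorValue_eq_zero_iff hr).1 hrest, hsplit⟩).elim

variable (hd : r.den ≠ 1)
include hd

lemma isAtomS_pow (k : ℕ) : IsAtomS r (r ^ k) := by
  have hval : factorValue r (single k 1) = r ^ k := by simp [factorValue_single]
  refine ⟨mem_S_iff.2 ⟨_, hval⟩, pow_ne_zero k (by linarith [one_le_of_num_eq hr]), ?_⟩
  rintro ⟨_, _, hy, hz, hy0, hz0, hsum⟩
  obtain ⟨β, rfl⟩ := mem_S_iff.1 hy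
  obtain ⟨γ, rfl⟩ := mem_S_iff.1 hz
  have hexp : IsExpanded r (single k 1) := fun i hi => by
    have := r.pos
    rw [single_apply]
    split_ifs <;> omega
  have hlen := hexp.le_flen hr (α := β + γ) (by rw [map_add, hval, hsum])
  rw [flen_add, flen_single] at hlen
  have hβ : flen β ≠ 0 := by rwa [Ne, flen_eq_zero_iff, ← factorValue_eq_zero_iff hr]
  have hγ : flen γ ≠ 0 := by rwa [Ne, flen_eq_zero_iff, ← factorValue_eq_zero_iff hr]
  omega

theorem atomLengthSet_eq_lengthSet (x : ℚ) : atomLengthSet r x = lengthSet r x := by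
  ext t
  constructor
  · rintro ⟨f, hf, rfl⟩
    choose k hk using fun i => IsAtomS.exists_eq_pow hr (hf i)
    refine ⟨∑ i, single (k i) 1, ?_, ?_⟩
    · simp [isFactorization_iff, map_sum, factorValue_single, hk]
    · simp [flen_eq_degree, map_sum]
  · rintro ⟨α, hα, rfl⟩
    set l := α.toMultiset.toList
    have hl : l.length = flen α := by simp [l, card_toMultiset]; rfl
    refine ⟨fun i => r ^ l[i.cast hl.symm], fun i => isAtomS_pow hr hd _, ?_⟩
    refine (Fin.sum_congr' (fun j : Fin l.length => r ^ l[j.1]) hl.symm).trans ?_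
    rw [← isFactorization_iff.1 hα, Fin.sum_univ_fun_getElem, ← Multiset.sum_coe,
      ← Multiset.map_coe, Multiset.coe_toList, factorValue_eq_sum_toMultiset]

theorem elast_eq_div {x : ℚ} (hx : x ≠ 0) {β γ : ℕ →₀ ℕ} (hβ : IsReduced r β)
    (hγ : IsExpanded r γ) (hβx : factorValue r β = x) (hγx : factorValue r γ = x) :
    elast r x = (flen γ : ℝ≥0∞) / flen β := by
  have hmem {α : ℕ →₀ ℕ} (hα : factorValue r α = x) : flen α ∈ atomLengthSet r x := by
    rw [atomLengthSet_eq_lengthSet hr hd]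
    exact ⟨α, isFactorization_iff.2 hα, rfl⟩
  have hbounds : ∀ t ∈ atomLengthSet r x, flen β ≤ t ∧ t ≤ flen γ := by
    rw [atomLengthSet_eq_lengthSet hr hd]
    rintro _ ⟨α, hα, rfl⟩
    rw [isFactorization_iff] at hα
    exact ⟨hβ.flen_le hr (hα.trans hβx.symm), hγ.le_flen hr (hα.trans hγx.symm)⟩
  have hleast : IsLeast (atomLengthSet r x) (flen β) :=
    ⟨hmem hβx, fun t ht => (hbounds t ht).1⟩
  have hgreatest : IsGreatest (atomLengthSet r x) (flen γ) :=
    ⟨hmem hγx, fun t ht => (hbounds t ht).2⟩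
  rw [elast, if_neg hx, if_pos hgreatest.bddAbove, hgreatest.csSup_eq, hleast.csInf_eq]

theorem exists_elast_eq_div {x : ℚ} (hx : x ∈ S r) :
    ∃ a b : ℕ, 0 < b ∧ b ≤ a ∧ elast r x = (a : ℝ≥0∞) / b := by
  by_cases hx0 : x = 0
  · exact ⟨1, 1, one_pos, le_rfl, by simp [elast, hx0]⟩
  obtain ⟨α, rfl⟩ := mem_S_iff.1 hx
  obtain ⟨β, hβα, -, hβ⟩ := exists_isReduced hr α
  obtain ⟨γ, hγα, -, hγ⟩ := exists_isExpanded hr α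
  refine ⟨flen γ, flen β, ?_, hβ.flen_le hr (hγα.trans hβα.symm),
    elast_eq_div hr hd hx0 hβ hγ hβα hγα⟩
  rwa [Nat.pos_iff_ne_zero, Ne, flen_eq_zero_iff, ← factorValue_eq_zero_iff hr, hβα]

lemma exists_mem_elast_eq (m k : ℕ) :
    ∃ x ∈ S r, elast r x = ((r.den + 1 + m + k : ℕ) : ℝ≥0∞) / (r.den + k : ℕ) := by
  set H := ones (Finset.Ico (m + 2) (m + 2 + k))
  set β := single (m + 1) r.den + H
  set γ := single 0 (r.den + 1) + ones (Finset.Ico 1 (m + 1)) + H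
  have hγβ : factorValue r γ = factorValue r β := by
    simp [β, γ, factorValue_single, factorValue_ones, den_mul_pow_succ hr]
  have hβ0 : β ≠ 0 := fun h => by
    have := DFunLike.congr_fun h (m + 1)
    simp [β, r.den_nz] at this
  have hH := ones_apply (Finset.Ico (m + 2) (m + 2 + k))
  have hM := ones_apply (Finset.Ico 1 (m + 1))
  simp only [Finset.mem_Ico] at hH hM
  have := r.pos
  have hred : IsReduced r β := fun i => by
    simp only [β, H, Finsupp.add_apply, single_apply, hH]
    split_ifs <;> omega
  have hexp : IsExpanded r γ := fun i hi => by
    simp only [γ, H, Finsupp.add_apply, single_apply, hH, hM]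
    split_ifs <;> omega
  refine ⟨factorValue r β, mem_S_iff.2 ⟨β, rfl⟩, ?_⟩
  rw [elast_eq_div hr hd (mt (factorValue_eq_zero_iff hr).1 hβ0) hred hexp rfl hγβ]
  congr 2
  · simp [γ, H, flen_add, flen_single, flen_ones]
  · simp [β, H, flen_add, flen_single, flen_ones]

lemma exists_mem_elast_eq_div {p q : ℕ} (hq : 0 < q) (hqp : q < p) :
    ∃ x ∈ S r, elast r x = (p : ℝ≥0∞) / q := by
  have := r.pos
  obtain ⟨m, hm⟩ : ∃ m, m + 1 = (p - q) * r.den :=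
    ⟨_, Nat.succ_pred_eq_of_pos (Nat.mul_pos (by omega) this)⟩
  obtain ⟨x, hx, he⟩ := exists_mem_elast_eq hr hd m ((q - 1) * r.den)
  have hp : r.den + 1 + m + (q - 1) * r.den = p * r.den := by
    zify [hqp.le, hq] at hm ⊢
    linear_combination hm
  have hq' : r.den + (q - 1) * r.den = q * r.den := by
    zify [hq]
    ring
  refine ⟨x, hx, ?_⟩
  rw [he, hp, hq', Nat.cast_mul, Nat.cast_mul,
    ENNReal.mul_div_mul_right _ _ (by simp [r.den_nz]) (ENNReal.natCast_ne_top _)]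

theorem exists_mem_elast_eq_ofReal {q : ℚ} (hq : 1 ≤ q) :
    ∃ x ∈ S r, elast r x = ENNReal.ofReal q := by
  rcases hq.eq_or_lt with rfl | hq
  · exact ⟨0, (S r).zero_mem, by simp [elast]⟩
  have hnum : ((q.num.toNat : ℕ) : ℚ) = q.num := by
    exact_mod_cast Int.toNat_of_nonneg (Rat.num_nonneg.2 (by linarith))
  have hq_eq : ((q.num.toNat : ℚ) / q.den : ℚ) = q := by rw [hnum, Rat.num_div_den]
  have hlt : q.den < q.num.toNat := by
    rw [← hq_eq, one_lt_div (by exact_mod_cast q.pos)] at hq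
    exact_mod_cast hq
  obtain ⟨x, hx, he⟩ := exists_mem_elast_eq_div hr hd q.pos hlt
  exact ⟨x, hx, by rw [he, ENNReal.natCast_div_natCast_eq_ofReal _ q.pos, hq_eq]⟩

end

end PuiseuxMonoid

open PuiseuxMonoid in
theorem stmt8_general (r : ℚ) (hd : r.den ≠ 1) (hnd : r.num = (r.den : ℤ) + 1) :
    (∀ x ∈ S r, elast r x ≠ ⊤) ∧
    {e : ℝ≥0∞ | ∃ x ∈ S r, elast r x = e} =
      {e : ℝ≥0∞ | ∃ q : ℚ, 1 ≤ q ∧ e = ENNReal.ofReal (q : ℝ)} := by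
  refine ⟨fun x hx => ?_, Set.ext fun e => ⟨?_, ?_⟩⟩
  · obtain ⟨a, b, hb, -, he⟩ := exists_elast_eq_div hnd hd hx
    rw [he]
    exact ENNReal.div_ne_top (ENNReal.natCast_ne_top a) (by exact_mod_cast hb.ne')
  · rintro ⟨x, hx, rfl⟩
    obtain ⟨a, b, hb, hba, he⟩ := exists_elast_eq_div hnd hd hx
    refine ⟨a / b, (one_le_div (by exact_mod_cast hb)).2 (by exact_mod_cast hba), ?_⟩
    rw [he, ENNReal.natCast_div_natCast_eq_ofReal a hb]
  · rintro ⟨q, hq, rfl⟩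
    exact exists_mem_elast_eq_ofReal hnd hd hq

theorem stmt8 (r : ℚ) (h0 : 0 < r) (hd : r.den ≠ 1) (hnd : r.num = (r.den : ℤ) + 1) :
    (∀ x ∈ S r, elast r x ≠ ⊤) ∧
    {e : ℝ≥0∞ | ∃ x ∈ S r, elast r x = e} =
      {e : ℝ≥0∞ | ∃ q : ℚ, 1 ≤ q ∧ e = ENNReal.ofReal (q : ℝ)} :=
  stmt8_general r hd hnd
end
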